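/- Two graphs are distinguished as non-isomorphic by the WL test (1-WL color refinement) if and only if they are distinguished by the Neighbor-SEG-WL test. -/

import Mathlib

/-- Canonical label space of the SEG-WL test after `t` iterations: at iteration `0` a label
is a pair (initial label, absolute structural encoding); at iteration `t+1` it is the
multiset of pairs (previous label, relative structural encoding).  Using this canonical
label space is equivalent to using arbitrary injective hash functions `Φ₀`, `Φ`. -/
def SegLabel (X A C : Type) : ℕ → Type
  | 0 => X × A
  | t + 1 => Multiset (SegLabel X A C t × C)

/-- The canonical SEG-WL test labels: for a graph with initial labels `h0`, absolute
structural encoding `fA` and relative structural encoding `fR` (both already evaluated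
on the given graph), `segwl h0 fA fR t v` is the label of vertex `v` after `t` iterations. -/
def segwl {V : Type} {X A C : Type} [Fintype V]
    (h0 : V → X) (fA : V → A) (fR : V → V → C) : (t : ℕ) → V → SegLabel X A C t
  | 0 => fun v => (h0 v, fA v)
  | t + 1 => fun v => Finset.univ.val.map (fun u => (segwl h0 fA fR t u, fR v u))

/-- Canonical label space of the 1-WL test after `t` iterations. -/
def WLLabel (X : Type) : ℕ → Type
  | 0 => X
  | t + 1 => WLLabel X t × Multiset (WLLabel X t)

/-- The canonical 1-WL (color refinement) labels: `wl G h0 t v` is the label of `v` after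
`t` iterations, updated as `w_t(v) = (w_{t-1}(v), {{w_{t-1}(u) : u ∈ N(v)}})`. -/
def wl {V X : Type} [Fintype V] (G : SimpleGraph V) [DecidableRel G.Adj]
    (h0 : V → X) : (t : ℕ) → V → WLLabel X t
  | 0 => h0
  | t + 1 => fun v => (wl G h0 t v, (G.neighborFinset v).val.map (wl G h0 t))

/-- The `Neighbor` relative structural encoding: `0` on the diagonal, `1` for adjacent
pairs and `2` for distinct non-adjacent pairs. -/
def neighborR {V : Type} [DecidableEq V] (G : SimpleGraph V) [DecidableRel G.Adj]
    (v u : V) : ℕ :=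
  if v = u then 0 else if G.Adj v u then 1 else 2

/-!
A SEG-WL label with the `Neighbor` encoding, filtered by the codes `0` and `1`, returns the
vertex's own previous label and the multiset of its neighbours' previous labels, so SEG-WL
refines WL, even across two graphs. Conversely, the multiset of pairs (previous label, code)
is determined by the WL label of the vertex together with the multiset of all WL labels of the
graph: code `2` collects everything that is neither the vertex nor a neighbour. So as long as
the WL label multisets of the two graphs agree, WL labels determine SEG-WL labels. Equality of
label multisets transfers along any such cross-graph refinement.
-/

theorem Multiset.map_eq_map_of_map_eq_map {α β γ δ : Type*} {s : Multiset α} {t : Multiset β}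
    {f₁ : α → γ} {f₂ : β → γ} {g₁ : α → δ} {g₂ : β → δ}
    (hfg : ∀ a ∈ s, ∀ b ∈ t, f₁ a = f₂ b → g₁ a = g₂ b) (h : s.map f₁ = t.map f₂) :
    s.map g₁ = t.map g₂ := by
  rw [← Multiset.rel_eq, Multiset.rel_map] at h ⊢
  exact h.mono hfg

namespace SimpleGraph

variable {V : Type} [Fintype V] [DecidableEq V] (G : SimpleGraph V) [DecidableRel G.Adj]

theorem univ_val_eq_cons_neighborFinset_add_compl (v : V) :
    (Finset.univ : Finset V).val =
      v ::ₘ ((G.neighborFinset v).val + (Gᶜ.neighborFinset v).val) := by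
  ext u
  by_cases huv : u = v
  · subst huv; simp
  · by_cases hadj : G.Adj v u <;>
      simp [Multiset.count_eq_of_nodup (Finset.nodup _), huv, Ne.symm huv, hadj]

theorem filter_neighborR_eq_zero (v : V) :
    Finset.univ.filter (fun u => neighborR G v u = 0) = {v} := by
  ext u
  rw [Finset.mem_filter, Finset.mem_singleton, neighborR]
  split_ifs with h <;> simp_all [eq_comm]

theorem filter_neighborR_eq_one (v : V) :
    Finset.univ.filter (fun u => neighborR G v u = 1) = G.neighborFinset v := by
  ext u
  rw [Finset.mem_filter, mem_neighborFinset, neighborR]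
  split_ifs with h <;> simp_all

variable {α : Type*}

theorem map_pair_neighborR_eq_cons (f : V → α) (v : V) :
    Finset.univ.val.map (fun u => (f u, neighborR G v u)) =
      (f v, 0) ::ₘ (((G.neighborFinset v).val.map f).map (·, 1) +
        ((Gᶜ.neighborFinset v).val.map f).map (·, 2)) := by
  rw [univ_val_eq_cons_neighborFinset_add_compl G v, Multiset.map_cons, Multiset.map_add,
    Multiset.map_map, Multiset.map_map]
  congr 1
  · simp [neighborR]
  congr 1 <;> refine Multiset.map_congr rfl fun u hu => ?_
  · have hvu : G.Adj v u := by simpa using hu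
    simp [neighborR, hvu, hvu.ne]
  · have hvu : Gᶜ.Adj v u := by simpa using hu
    simp [neighborR, hvu.1, hvu.2]

theorem map_fst_filter_map_pair_neighborR (f : V → α) (v : V) (k : ℕ) :
    ((Finset.univ.val.map (fun u => (f u, neighborR G v u))).filter (·.2 = k)).map Prod.fst =
      (Finset.univ.filter (neighborR G v · = k)).val.map f := by
  rw [Multiset.filter_map, Multiset.map_map, Finset.filter_val]
  rfl

end SimpleGraph

open SimpleGraph

section

variable {V₁ V₂ : Type} [Fintype V₁] [Fintype V₂] [DecidableEq V₁] [DecidableEq V₂]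
  {G₁ : SimpleGraph V₁} {G₂ : SimpleGraph V₂} [DecidableRel G₁.Adj] [DecidableRel G₂.Adj]

theorem map_pair_neighborR_eq_iff {α : Type*} {f₁ : V₁ → α} {f₂ : V₂ → α} {v₁ : V₁} {v₂ : V₂} :
    Finset.univ.val.map (fun u => (f₁ u, neighborR G₁ v₁ u)) =
        Finset.univ.val.map (fun u => (f₂ u, neighborR G₂ v₂ u)) ↔
      f₁ v₁ = f₂ v₂ ∧ (G₁.neighborFinset v₁).val.map f₁ = (G₂.neighborFinset v₂).val.map f₂ ∧
        Finset.univ.val.map f₁ = Finset.univ.val.map f₂ := by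
  constructor
  · intro h
    have part (k : ℕ) : (Finset.univ.filter (neighborR G₁ v₁ · = k)).val.map f₁ =
        (Finset.univ.filter (neighborR G₂ v₂ · = k)).val.map f₂ := by
      simpa only [map_fst_filter_map_pair_neighborR] using
        congrArg (fun m => (m.filter (·.2 = k)).map Prod.fst) h
    have hself := part 0
    have nbrs := part 1
    rw [filter_neighborR_eq_zero, filter_neighborR_eq_zero] at hself
    rw [filter_neighborR_eq_one, filter_neighborR_eq_one] at nbrs
    refine ⟨by simpa using hself, nbrs, ?_⟩
    simpa [Multiset.map_map] using congrArg (Multiset.map Prod.fst) h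
  · rintro ⟨hv, hN, huniv⟩
    have hcompl : (G₁ᶜ.neighborFinset v₁).val.map f₁ = (G₂ᶜ.neighborFinset v₂).val.map f₂ := by
      rwa [univ_val_eq_cons_neighborFinset_add_compl G₁ v₁,
        univ_val_eq_cons_neighborFinset_add_compl G₂ v₂, Multiset.map_cons, Multiset.map_cons,
        Multiset.map_add, Multiset.map_add, hv, hN, Multiset.cons_inj_right,
        add_right_inj] at huniv
    rw [map_pair_neighborR_eq_cons, map_pair_neighborR_eq_cons, hv, hN, hcompl]

variable {X : Type} {h₁ : V₁ → X} {h₂ : V₂ → X}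

theorem wl_eq_of_segwl_neighborR_eq {A : Type} {a₁ : V₁ → A} {a₂ : V₂ → A} :
    ∀ {t : ℕ} {v₁ : V₁} {v₂ : V₂},
      segwl h₁ a₁ (neighborR G₁) t v₁ = segwl h₂ a₂ (neighborR G₂) t v₂ →
        wl G₁ h₁ t v₁ = wl G₂ h₂ t v₂
  | 0, _, _, hseg => congrArg Prod.fst hseg
  | t + 1, v₁, v₂, hseg => by
    obtain ⟨hv, hN, -⟩ := map_pair_neighborR_eq_iff.1 hseg
    exact Prod.ext (wl_eq_of_segwl_neighborR_eq hv)
      (Multiset.map_eq_map_of_map_eq_map (fun _ _ _ _ => wl_eq_of_segwl_neighborR_eq) hN)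

theorem segwl_neighborR_eq_of_wl_eq {t : ℕ}
    (hM : Finset.univ.val.map (wl G₁ h₁ t) = Finset.univ.val.map (wl G₂ h₂ t))
    {v₁ : V₁} {v₂ : V₂} (hwl : wl G₁ h₁ t v₁ = wl G₂ h₂ t v₂) :
    segwl h₁ (fun _ => PUnit.unit) (neighborR G₁) t v₁ =
      segwl h₂ (fun _ => PUnit.unit) (neighborR G₂) t v₂ := by
  induction t generalizing v₁ v₂ with
  | zero => exact Prod.ext hwl rfl
  | succ t ih =>
    have hM' : Finset.univ.val.map (wl G₁ h₁ t) = Finset.univ.val.map (wl G₂ h₂ t) :=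
      Multiset.map_eq_map_of_map_eq_map (fun _ _ _ _ h => congrArg Prod.fst h) hM
    have hpairs := map_pair_neighborR_eq_iff (f₁ := wl G₁ h₁ t) (f₂ := wl G₂ h₂ t) |>.2
      ⟨congrArg Prod.fst hwl, congrArg Prod.snd hwl, hM'⟩
    refine Multiset.map_eq_map_of_map_eq_map (fun _ _ _ _ hab => ?_) hpairs
    obtain ⟨hlabel, hcode⟩ := Prod.ext_iff.1 hab
    exact Prod.ext (ih hM' hlabel) hcode

end

/-- Two labeled graphs are distinguished as non-isomorphic by the WL test (the multisets
of WL labels differ at some iteration) if and only if they are distinguished by the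
`Neighbor`-SEG-WL test. -/
theorem wl_iff_neighbor_segwl {V₁ V₂ X : Type} [Fintype V₁] [Fintype V₂]
    [DecidableEq V₁] [DecidableEq V₂]
    (G₁ : SimpleGraph V₁) (G₂ : SimpleGraph V₂)
    [DecidableRel G₁.Adj] [DecidableRel G₂.Adj]
    (h₁ : V₁ → X) (h₂ : V₂ → X) :
    (∃ t, Finset.univ.val.map (wl G₁ h₁ t) ≠ Finset.univ.val.map (wl G₂ h₂ t)) ↔
    (∃ t, Finset.univ.val.map (segwl h₁ (fun _ => PUnit.unit) (neighborR G₁) t) ≠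
          Finset.univ.val.map (segwl h₂ (fun _ => PUnit.unit) (neighborR G₂) t)) := by
  constructor
  · rintro ⟨t, hwl⟩
    exact ⟨t, fun hseg => hwl <| Multiset.map_eq_map_of_map_eq_map
      (fun _ _ _ _ => wl_eq_of_segwl_neighborR_eq) hseg⟩
  · rintro ⟨t, hseg⟩
    by_contra! hwl
    exact hseg <| Multiset.map_eq_map_of_map_eq_map
      (fun _ _ _ _ => segwl_neighborR_eq_of_wl_eq (hwl t)) (hwl t)
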